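/- The formal derivative of the Catalan generating function satisfies c'(x)·(1 - 2x·c(x)) = c(x)^2 as formal power series. -/

import Mathlib

/-!
Recognising the coefficients `(2k)!/(k!(k+1)!)` as Catalan numbers, `c` satisfies Mathlib's
quadratic identity `c = 1 + x c²`. Differentiating gives `c' = c² + 2x c c'`.
-/

open PowerSeries

/-- The generating function of the Catalan numbers `C_k = (2k)!/(k!(k+1)!)` over `ℚ`. -/
noncomputable def catGF : PowerSeries ℚ :=
  PowerSeries.mk fun k => ((2 * k).factorial : ℚ) / ((k.factorial : ℚ) * ((k + 1).factorial : ℚ))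

open Nat in
theorem cast_catalan_eq_factorial_div {K : Type*} [Field K] [CharZero K] (n : ℕ) :
    (catalan n : K) = (2 * n)! / (n ! * (n + 1)!) := by
  have h : (n + 1) * catalan n * (n ! * n !) = (2 * n)! := by
    have := choose_mul_factorial_mul_factorial (show n ≤ 2 * n by omega)
    rwa [show 2 * n - n = n by omega, mul_assoc, ← centralBinom_eq_two_mul_choose,
      ← succ_mul_catalan_eq_centralBinom] at this
  rw [eq_div_iff (by simp [factorial_ne_zero]), ← h, factorial_succ]
  push_cast
  ring

theorem catGF_eq_map_catalanSeries : catGF = map (Nat.castRingHom ℚ) catalanSeries := by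
  ext k
  simp [catGF, cast_catalan_eq_factorial_div]

theorem catGF_sq_mul_X_add_one : catGF ^ 2 * X + 1 = catGF := by
  simpa [catGF_eq_map_catalanSeries] using
    congrArg (map (Nat.castRingHom ℚ)) catalanSeries_sq_mul_X_add_one

theorem derivative_mul_one_sub_eq_sq_of_sq_mul_X_add_one {R : Type*} [CommRing R]
    {f : R⟦X⟧} (hf : f ^ 2 * X + 1 = f) : d⁄dX R f * (1 - 2 * X * f) = f ^ 2 := by
  have h := congrArg (d⁄dX R) hf
  simp only [map_add, Derivation.leibniz, Derivation.leibniz_pow, derivative_X,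
    Derivation.map_one_eq_zero, smul_eq_mul, nsmul_eq_mul] at h
  linear_combination -h

/-- `c'(x)·(1 - 2x·c(x)) = c(x)^2` as formal power series. -/
theorem catGF_deriv_eq :
    catGF.derivativeFun * (1 - 2 * PowerSeries.X * catGF) = catGF ^ 2 :=
  -- `derivativeFun f` is definitionally `d⁄dX ℚ f`
  derivative_mul_one_sub_eq_sq_of_sq_mul_X_add_one catGF_sq_mul_X_add_one
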